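/- arXiv:2202.03174 — 2 statements merged into one kernel-verified Lean document; each statement's English description precedes it below -/
import Mathlib

section
/- Let (X,r) be a left non-degenerate set-theoretic solution of the YBE and M = M(X,r) with its two operations + and ∘. Then the relation μ (defined by the iterative construction below) is a congruence on the monoid (M,∘) and the quotient monoid (M,∘)/μ is left cancellative. -/
open scoped Classical

section YBEDefs

variable {X : Type*}

/-- First component `σ_x(y)` of `r (x, y)`. -/
def ybeSigma (r : X × X → X × X) (x y : X) : X := (r (x, y)).1

/-- Second component `γ_y(x)` of `r (x, y)`. -/
def ybeGamma (r : X × X → X × X) (y x : X) : X := (r (x, y)).2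

/-- `r` acting on the first two components of `X³`. -/
def yb12 (r : X × X → X × X) : X × X × X → X × X × X :=
  fun p => ((r (p.1, p.2.1)).1, ((r (p.1, p.2.1)).2, p.2.2))

/-- `r` acting on the last two components of `X³`. -/
def yb23 (r : X × X → X × X) : X × X × X → X × X × X :=
  fun p => (p.1, r p.2)

/-- `(X, r)` is a set-theoretic solution of the Yang–Baxter equation. -/
def IsYBE (r : X × X → X × X) : Prop :=
  yb12 r ∘ yb23 r ∘ yb12 r = yb23 r ∘ yb12 r ∘ yb23 r

/-- left non-degenerate: all `σ_x` are bijective. -/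
def IsLeftND (r : X × X → X × X) : Prop := ∀ x, Function.Bijective (ybeSigma r x)

/-- right non-degenerate: all `γ_y` are bijective. -/
def IsRightND (r : X × X → X × X) : Prop := ∀ y, Function.Bijective (ybeGamma r y)

/-- The defining relations `x∘y = σ_x(y) ∘ γ_y(x)` of the structure monoid. -/
def structRel (r : X × X → X × X) : FreeMonoid X → FreeMonoid X → Prop :=
  fun a b => ∃ x y : X, a = FreeMonoid.of x * FreeMonoid.of y ∧
    b = FreeMonoid.of (ybeSigma r x y) * FreeMonoid.of (ybeGamma r y x)

/-- The congruence on the free monoid generated by the defining relations. -/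
def structCon (r : X × X → X × X) : Con (FreeMonoid X) := conGen (structRel r)

/-- The (multiplicative) structure monoid `M(X, r)`. -/
abbrev SM (r : X × X → X × X) := (structCon r).Quotient

/-- The canonical image of a generator `x ∈ X` in `M(X, r)`. -/
def ofSM (r : X × X → X × X) (x : X) : SM r := (structCon r).mk' (FreeMonoid.of x)

/-- The left derived solution `r'(x,y) = (y, σ_y γ_{σ_x⁻¹(y)}(x))`. -/
noncomputable def derivedR (r : X × X → X × X) : X × X → X × X := fun p =>
  haveI : Nonempty X := ⟨p.1⟩
  (p.2, ybeSigma r p.2 (ybeGamma r (Function.invFun (ybeSigma r p.1) p.2) p.1))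

/-- The defining relations `x + y = y + σ_y γ_{σ_x⁻¹(y)}(x)` of the derived
structure monoid, written additively. -/
def derivedRel (r : X × X → X × X) : FreeAddMonoid X → FreeAddMonoid X → Prop :=
  fun a b => ∃ x y : X, a = FreeAddMonoid.of x + FreeAddMonoid.of y ∧
    b = FreeAddMonoid.of ((derivedR r (x, y)).1) + FreeAddMonoid.of ((derivedR r (x, y)).2)

/-- The additive congruence generated by the derived relations. -/
noncomputable def derivedAddCon (r : X × X → X × X) : AddCon (FreeAddMonoid X) :=
  addConGen (derivedRel r)

/-- The additive structure monoid `A(X, r) = M(X, r')`. -/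
noncomputable abbrev AM (r : X × X → X × X) := (derivedAddCon r).Quotient

/-- The canonical image of a generator `x ∈ X` in `A(X, r)`. -/
noncomputable def ofAM (r : X × X → X × X) (x : X) : AM r :=
  (derivedAddCon r).mk' (FreeAddMonoid.of x)

end YBEDefs

/-- The group structure on `AddAut A` by composition, written multiplicatively as in the
older Mathlib (`e₁ * e₂ = e₂.trans e₁`). -/
instance addAutMulGroupOld (A : Type*) [Add A] : Group (AddAut A) :=
  inferInstanceAs (Group (Multiplicative (AddAut A)))

section MuDefs

variable {X : Type*}

/-- The multiplication `a ∘ b = a + λ'_a(b)` of `M(X,r)` transported to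
`A(X,r)` via the identification `π`. -/
noncomputable def opA (r : X × X → X × X) (lam : SM r →* AddAut (AM r)) (pi : SM r ≃ AM r)
    (a b : AM r) : AM r :=
  a + lam (pi.symm a) b

/-- The map `λ'` indexed by elements of `A(X,r)` via the identification `π`. -/
noncomputable def lamA (r : X × X → X × X) (lam : SM r →* AddAut (AM r)) (pi : SM r ≃ AM r)
    (a : AM r) : AddAut (AM r) :=
  lam (pi.symm a)

/-- The relations `μ₀, μ₁, μ₂, …` of the iterative construction:
`μ₀ = {(a,b) : ∃ c, c + a = c + b}`; `μ_{4m+1}` is the transitive closure of `μ_{4m}`;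
`μ_{4m+2} = {((λ'_z)^ε(a∘c), (λ'_z)^ε(b∘c)) : z, c ∈ M, ε ∈ {-1,1}, (a,b) ∈ μ_{4m+1}}`;
`μ_{4m+3}` is the transitive closure of `μ_{4m+2}`;
`μ_{4m+4} = {(c+a+d, c+b+d) : (a,b) ∈ μ_{4m+3}} ∪ {(a,b) : ∃ c, (c+a, c+b) ∈ μ_{4m+3}}`. -/
def muN (r : X × X → X × X) (lam : SM r →* AddAut (AM r)) (pi : SM r ≃ AM r) :
    ℕ → AM r → AM r → Prop
  | 0 => fun a b => ∃ c : AM r, c + a = c + b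
  | n + 1 =>
    if n % 4 = 0 ∨ n % 4 = 2 then Relation.TransGen (muN r lam pi n)
    else if n % 4 = 1 then
      fun u v => ∃ (z : SM r) (c a b : AM r), muN r lam pi n a b ∧
        ((u = lam z (opA r lam pi a c) ∧ v = lam z (opA r lam pi b c)) ∨
         (u = (lam z)⁻¹ (opA r lam pi a c) ∧ v = (lam z)⁻¹ (opA r lam pi b c)))
    else
      fun u v =>
        (∃ c d a b : AM r, muN r lam pi n a b ∧ u = c + a + d ∧ v = c + b + d) ∨
        (∃ c : AM r, muN r lam pi n (c + u) (c + v))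

/-- `μ = ⋃_{n ≥ 0} μ_n`. -/
def muRel (r : X × X → X × X) (lam : SM r →* AddAut (AM r)) (pi : SM r ≃ AM r) :
    AM r → AM r → Prop :=
  fun a b => ∃ n, muN r lam pi n a b

end MuDefs

section MuProofs

variable {X : Type*} (r : X × X → X × X) (lam : SM r →* AddAut (AM r)) (pi : SM r ≃ AM r)

lemma opA_zero (a : AM r) : opA r lam pi a 0 = a := by
  simp [opA]

lemma muN_eqTG {n : ℕ} (h : n % 4 = 0 ∨ n % 4 = 2) :
    muN r lam pi (n + 1) = Relation.TransGen (muN r lam pi n) := by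
  rw [muN, if_pos h]

lemma muN_eq2 {n : ℕ} (h : n % 4 = 1) :
    muN r lam pi (n + 1) = fun u v => ∃ (z : SM r) (c a b : AM r), muN r lam pi n a b ∧
        ((u = lam z (opA r lam pi a c) ∧ v = lam z (opA r lam pi b c)) ∨
         (u = (lam z)⁻¹ (opA r lam pi a c) ∧ v = (lam z)⁻¹ (opA r lam pi b c))) := by
  rw [muN, if_neg (by omega), if_pos h]

lemma muN_eq4 {n : ℕ} (h : n % 4 = 3) :
    muN r lam pi (n + 1) = fun u v =>
        (∃ c d a b : AM r, muN r lam pi n a b ∧ u = c + a + d ∧ v = c + b + d) ∨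
        (∃ c : AM r, muN r lam pi n (c + u) (c + v)) := by
  rw [muN, if_neg (by omega), if_neg (by omega)]

lemma muN_step {n : ℕ} {a b : AM r} (h : muN r lam pi n a b) : muN r lam pi (n + 1) a b := by
  rcases (by omega : n % 4 = 0 ∨ n % 4 = 1 ∨ n % 4 = 2 ∨ n % 4 = 3) with h4 | h4 | h4 | h4
  · rw [muN_eqTG r lam pi (Or.inl h4)]; exact .single h
  · rw [muN_eq2 r lam pi h4]
    exact ⟨1, 0, a, b, h, Or.inl ⟨by simp [opA_zero]; rfl, by simp [opA_zero]; rfl⟩⟩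
  · rw [muN_eqTG r lam pi (Or.inr h4)]; exact .single h
  · rw [muN_eq4 r lam pi h4]
    exact Or.inl ⟨0, 0, a, b, h, by simp, by simp⟩

lemma muN_mono {n m : ℕ} (hnm : n ≤ m) {a b : AM r} (h : muN r lam pi n a b) :
    muN r lam pi m a b := by
  induction hnm with
  | refl => exact h
  | step _ ih => exact muN_step r lam pi ih

private lemma transGen_symm {α : Type*} {rr : α → α → Prop} (hs : ∀ x y, rr x y → rr y x)
    {a b : α} (h : Relation.TransGen rr a b) : Relation.TransGen rr b a := by
  induction h with
  | single h' => exact .single (hs _ _ h')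
  | tail _ h' ih => exact (Relation.TransGen.single (hs _ _ h')).trans ih

lemma muN_symm : ∀ (n : ℕ) (a b : AM r), muN r lam pi n a b → muN r lam pi n b a := by
  intro n
  induction n with
  | zero => rintro a b ⟨c, hc⟩; exact ⟨c, hc.symm⟩
  | succ k ih =>
    intro a b h
    rcases (by omega : k % 4 = 0 ∨ k % 4 = 2 ∨ k % 4 = 1 ∨ k % 4 = 3) with h4 | h4 | h4 | h4
    · rw [muN_eqTG r lam pi (Or.inl h4)] at h ⊢; exact transGen_symm ih h
    · rw [muN_eqTG r lam pi (Or.inr h4)] at h ⊢; exact transGen_symm ih h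
    · rw [muN_eq2 r lam pi h4] at h ⊢
      obtain ⟨z, c, a0, b0, hab, hd⟩ := h
      refine ⟨z, c, b0, a0, ih _ _ hab, ?_⟩
      rcases hd with ⟨hu, hv⟩ | ⟨hu, hv⟩
      · exact Or.inl ⟨hv, hu⟩
      · exact Or.inr ⟨hv, hu⟩
    · rw [muN_eq4 r lam pi h4] at h ⊢
      rcases h with ⟨c, d, a0, b0, hab, hu, hv⟩ | ⟨c, hc⟩
      · exact Or.inl ⟨c, d, b0, a0, ih _ _ hab, hv, hu⟩
      · exact Or.inr ⟨c, ih _ _ hc⟩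

lemma muRel_refl (a : AM r) : muRel r lam pi a a := ⟨0, 0, rfl⟩

lemma muRel_symm {a b : AM r} (h : muRel r lam pi a b) : muRel r lam pi b a := by
  obtain ⟨n, hn⟩ := h
  exact ⟨n, muN_symm r lam pi n a b hn⟩

lemma muRel_trans {a b c : AM r} (h1 : muRel r lam pi a b) (h2 : muRel r lam pi b c) :
    muRel r lam pi a c := by
  obtain ⟨n, hn⟩ := h1
  obtain ⟨m, hm⟩ := h2
  refine ⟨4 * (n + m) + 1, ?_⟩
  rw [muN_eqTG r lam pi (Or.inl (by omega))]
  exact (Relation.TransGen.single (muN_mono r lam pi (by omega) hn)).trans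
    (.single (muN_mono r lam pi (by omega) hm))

lemma muRel_lam {a b : AM r} (z : SM r) (h : muRel r lam pi a b) :
    muRel r lam pi (lam z a) (lam z b) := by
  obtain ⟨n, hn⟩ := h
  refine ⟨4 * n + 2, ?_⟩
  rw [muN_eq2 r lam pi (by omega)]
  exact ⟨z, 0, a, b, muN_mono r lam pi (by omega) hn,
    Or.inl ⟨by rw [opA_zero], by rw [opA_zero]⟩⟩

lemma muRel_lam_inv {a b : AM r} (z : SM r) (h : muRel r lam pi a b) :
    muRel r lam pi ((lam z)⁻¹ a) ((lam z)⁻¹ b) := by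
  obtain ⟨n, hn⟩ := h
  refine ⟨4 * n + 2, ?_⟩
  rw [muN_eq2 r lam pi (by omega)]
  exact ⟨z, 0, a, b, muN_mono r lam pi (by omega) hn,
    Or.inr ⟨by rw [opA_zero], by rw [opA_zero]⟩⟩

lemma muRel_op_right {a b : AM r} (c : AM r) (h : muRel r lam pi a b) :
    muRel r lam pi (opA r lam pi a c) (opA r lam pi b c) := by
  obtain ⟨n, hn⟩ := h
  refine ⟨4 * n + 2, ?_⟩
  rw [muN_eq2 r lam pi (by omega)]
  exact ⟨1, c, a, b, muN_mono r lam pi (by omega) hn, Or.inl ⟨by simp; rfl, by simp; rfl⟩⟩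

lemma muRel_add {a b : AM r} (c d : AM r) (h : muRel r lam pi a b) :
    muRel r lam pi (c + a + d) (c + b + d) := by
  obtain ⟨n, hn⟩ := h
  refine ⟨4 * n + 4, ?_⟩
  rw [muN_eq4 r lam pi (by omega)]
  exact Or.inl ⟨c, d, a, b, muN_mono r lam pi (by omega) hn, rfl, rfl⟩

lemma muRel_cancel_add {a b : AM r} (c : AM r) (h : muRel r lam pi (c + a) (c + b)) :
    muRel r lam pi a b := by
  obtain ⟨n, hn⟩ := h
  refine ⟨4 * n + 4, ?_⟩
  rw [muN_eq4 r lam pi (by omega)]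
  exact Or.inr ⟨c, muN_mono r lam pi (by omega) hn⟩

end MuProofs

/-- `μ` is a congruence on `(M, ∘)` and the quotient `(M,∘)/μ` is left
cancellative. -/

theorem mu_mul_congruence {X : Type*} (r : X × X → X × X)
    (hYBE : IsYBE r) (hLND : IsLeftND r)
(lam : SM r →* AddAut (AM r))
    (hlamX : ∀ x y : X, lam (ofSM r x) (ofAM r y) = ofAM r (ybeSigma r x y))
    (pi : SM r ≃ AM r)
    (hpiX : ∀ x : X, pi (ofSM r x) = ofAM r x)
    (hpi : ∀ a b : SM r, pi (a * b) = pi a + lam a (pi b)) :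
    Equivalence (muRel r lam pi) ∧
    (∀ a b c d : AM r, muRel r lam pi a b → muRel r lam pi c d →
      muRel r lam pi (opA r lam pi a c) (opA r lam pi b d)) ∧
    (∀ z a b : AM r, muRel r lam pi (opA r lam pi z a) (opA r lam pi z b) →
      muRel r lam pi a b) := by
  constructor
  · exact ⟨muRel_refl r lam pi, fun h => muRel_symm r lam pi h,
      fun h1 h2 => muRel_trans r lam pi h1 h2⟩
  constructor
  · intro a b c d hab hcd
    refine muRel_trans r lam pi (muRel_op_right r lam pi c hab) ?_
    have h1 : muRel r lam pi (lam (pi.symm b) c) (lam (pi.symm b) d) :=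
      muRel_lam r lam pi _ hcd
    have h2 := muRel_add r lam pi b 0 h1
    simpa [opA] using h2
  · intro z a b h
    have h1 : muRel r lam pi (lam (pi.symm z) a) (lam (pi.symm z) b) :=
      muRel_cancel_add r lam pi z h
    have h2 := muRel_lam_inv r lam pi (pi.symm z) h1
    have h3 : ∀ x, (lam (pi.symm z))⁻¹ (lam (pi.symm z) x) = x :=
      fun x => (lam (pi.symm z)).symm_apply_apply x
    simpa [h3] using h2
end

section
/- Let (X,r) be a bijective left and right non-degenerate set-theoretic solution of the YBE, M = M(X,r) with its two operations + and ∘, ν the least left cancellative congruence on (M,∘), and η the least left cancellative congruence on (M,+). Then for every z ∈ M, ν = {(λ'_z(a), λ'_z(b)) : (a,b) ∈ ν} = {((λ'_z)^{-1}(a), (λ'_z)^{-1}(b)) : (a,b) ∈ ν}, and λ'_a = λ'_b for all (a,b) ∈ η. -/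
open scoped Classical

section AuxYBE

variable {X : Type*} (r : X × X → X × X)

lemma ybe_comp1 (hYBE : IsYBE r) (x y z : X) :
    ybeSigma r (ybeSigma r x y) (ybeSigma r (ybeGamma r y x) z)
      = ybeSigma r x (ybeSigma r y z) := by
  have h1 := congrArg Prod.fst (congrFun hYBE (x, (y, z)))
  simpa [yb12, yb23, ybeSigma, ybeGamma, Function.comp] using h1

lemma exists_sigma_fix (hYBE : IsYBE r) (hLND : IsLeftND r) (hRND : IsRightND r) (x : X) :
    ∃ y, ybeSigma r y x = y := by
  obtain ⟨c, hc⟩ := (hRND x).2 x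
  obtain ⟨z, hz⟩ := (hLND x).2 x
  refine ⟨ybeSigma r c x, ?_⟩
  have h := ybe_comp1 r hYBE c x z
  rw [hc, hz] at h
  exact h

end AuxYBE

section MAutInst

@[simp] lemma MAut.mul_apply {A : Type*} [Add A] (e₁ e₂ : Multiplicative (AddAut A)) (m : A) :
    (e₁ * e₂) m = e₁ (e₂ m) := rfl

@[simp] lemma MAut.one_apply {A : Type*} [Add A] (m : A) :
    (1 : Multiplicative (AddAut A)) m = m := rfl

lemma MAut.apply_inv_self {A : Type*} [Add A] (e : Multiplicative (AddAut A)) (m : A) :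
    e⁻¹ (e m) = m := (Multiplicative.toAdd e).symm_apply_apply m

lemma MAut.inv_apply_self {A : Type*} [Add A] (e : Multiplicative (AddAut A)) (m : A) :
    e (e⁻¹ m) = m := (Multiplicative.toAdd e).apply_symm_apply m

end MAutInst

section AuxMain

variable {X : Type*} {r : X × X → X × X}
  (lam : SM r →* Multiplicative (AddAut (AM r))) (pi : SM r ≃ AM r)

noncomputable def theta (n : SM r) : AM r := (lam n)⁻¹ (pi n)

noncomputable def lamG : Subgroup (Multiplicative (AddAut (AM r))) :=
  Subgroup.closure (Set.range (fun m : SM r => lam m))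

lemma lam_mem_lamG (m : SM r) : lam m ∈ lamG lam :=
  Subgroup.subset_closure ⟨m, rfl⟩

lemma pi_one_eq (hpi : ∀ a b : SM r, pi (a * b) = pi a + lam a (pi b)) :
    pi (1 : SM r) = 0 := by
  have h := hpi 1 (pi.symm 0)
  rw [one_mul, Equiv.apply_symm_apply, show lam 1 = 1 from map_one lam,
    MAut.one_apply, add_zero] at h
  exact h.symm

lemma theta_mul (hpi : ∀ a b : SM r, pi (a * b) = pi a + lam a (pi b)) (a b : SM r) :
    theta lam pi (a * b) = (lam b)⁻¹ (theta lam pi a) + theta lam pi b := by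
  unfold theta
  rw [hpi, map_mul, mul_inv_rev, MAut.mul_apply, map_add, map_add, MAut.apply_inv_self]

lemma lam_ofSM_word (hlamX : ∀ x y : X, lam (ofSM r x) (ofAM r y) = ofAM r (ybeSigma r x y))
    (y : X) (l : List X) :
    lam (ofSM r y) ((derivedAddCon r).mk' (FreeAddMonoid.ofList l))
      = (derivedAddCon r).mk' (FreeAddMonoid.ofList (l.map (ybeSigma r y))) := by
  induction l with
  | nil => simp [FreeAddMonoid.ofList_nil]
  | cons a t ih =>
      rw [List.map_cons, FreeAddMonoid.ofList_cons, FreeAddMonoid.ofList_cons]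
      simp only [map_add]
      rw [ih]
      congr 1
      exact hlamX y a

lemma theta_surj (hYBE : IsYBE r) (hLND : IsLeftND r) (hRND : IsRightND r)
    (hlamX : ∀ x y : X, lam (ofSM r x) (ofAM r y) = ofAM r (ybeSigma r x y))
    (hpiX : ∀ x : X, pi (ofSM r x) = ofAM r x)
    (hpi : ∀ a b : SM r, pi (a * b) = pi a + lam a (pi b)) :
    Function.Surjective (theta lam pi) := by
  have hnil : theta lam pi 1 = (derivedAddCon r).mk' (FreeAddMonoid.ofList []) := by
    unfold theta
    rw [map_one, inv_one, MAut.one_apply, pi_one_eq lam pi hpi,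
      FreeAddMonoid.ofList_nil, map_zero]
  have key : ∀ (k : ℕ) (l : List X), l.length ≤ k →
      ∃ n, theta lam pi n = (derivedAddCon r).mk' (FreeAddMonoid.ofList l) := by
    intro k
    induction k with
    | zero =>
        intro l hl
        have : l = [] := List.length_eq_zero_iff.mp (Nat.le_zero.mp hl)
        subst this
        exact ⟨1, hnil⟩
    | succ k ih =>
        intro l hl
        rcases List.eq_nil_or_concat l with rfl | ⟨L, x, rfl⟩
        · exact ⟨1, hnil⟩
        · obtain ⟨y, hy⟩ := exists_sigma_fix r hYBE hLND hRND x
          have hlen : (L.map (ybeSigma r y)).length ≤ k := by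
            rw [List.length_map]
            have h3 := hl
            rw [List.concat_eq_append, List.length_append] at h3
            simp at h3
            omega
          obtain ⟨n', hn'⟩ := ih (L.map (ybeSigma r y)) hlen
          refine ⟨n' * ofSM r y, ?_⟩
          rw [theta_mul lam pi hpi, hn', ← lam_ofSM_word lam hlamX y L,
            MAut.apply_inv_self]
          have hth : theta lam pi (ofSM r y) = (derivedAddCon r).mk' (FreeAddMonoid.of x) := by
            unfold theta
            rw [hpiX y]
            have h2 : lam (ofSM r y) (ofAM r x) = ofAM r y := by rw [hlamX y x, hy]
            rw [show ofAM r y = lam (ofSM r y) (ofAM r x) from h2.symm, MAut.apply_inv_self]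
            rfl
          rw [hth, ← map_add, List.concat_eq_append, FreeAddMonoid.ofList_append,
            FreeAddMonoid.ofList_singleton]
  intro v
  obtain ⟨w, rfl⟩ := AddCon.mk'_surjective v
  obtain ⟨n, hn⟩ := key (FreeAddMonoid.toList w).length (FreeAddMonoid.toList w) le_rfl
  rw [FreeAddMonoid.ofList_toList] at hn
  exact ⟨n, hn⟩

lemma solveF (hsurj : Function.Surjective (theta lam pi))
    {g' : Multiplicative (AddAut (AM r))} (hg' : g' ∈ lamG lam) (w : AM r) :
    ∃ g ∈ lamG lam, (lam (pi.symm (g w)))⁻¹ * g = g' := by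
  obtain ⟨n, hn⟩ := hsurj (g' w)
  refine ⟨lam n * g', mul_mem (lam_mem_lamG lam n) hg', ?_⟩
  have h1 : (lam n * g') w = pi n := by
    rw [MAut.mul_apply, ← hn]
    unfold theta
    rw [MAut.inv_apply_self]
  rw [h1, Equiv.symm_apply_apply, inv_mul_cancel_left]

lemma solveE (hsurj : Function.Surjective (theta lam pi))
    {g' : Multiplicative (AddAut (AM r))} (hg' : g' ∈ lamG lam) (w : SM r) :
    ∃ g ∈ lamG lam, (lam (pi.symm (g (pi w))))⁻¹ * g * lam w = g' := by
  obtain ⟨n, hn⟩ := hsurj (g' ((lam w)⁻¹ (pi w)))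
  refine ⟨lam n * g' * (lam w)⁻¹,
    mul_mem (mul_mem (lam_mem_lamG lam n) hg') (inv_mem (lam_mem_lamG lam w)), ?_⟩
  have h1 : (lam n * g' * (lam w)⁻¹) (pi w) = pi n := by
    rw [MAut.mul_apply, MAut.mul_apply, ← hn]
    unfold theta
    rw [MAut.inv_apply_self]
  rw [h1, Equiv.symm_apply_apply]
  group

lemma dec_mul (hpi : ∀ a b : SM r, pi (a * b) = pi a + lam a (pi b))
    (g : Multiplicative (AddAut (AM r))) (a b : SM r) :
    pi.symm (g (pi (a * b)))
      = pi.symm (g (pi a)) *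
        pi.symm (((lam (pi.symm (g (pi a))))⁻¹ * g * lam a) (pi b)) := by
  apply pi.injective
  rw [Equiv.apply_symm_apply, hpi (pi.symm (g (pi a))), hpi a b]
  simp only [Equiv.apply_symm_apply, map_add, MAut.mul_apply, MAut.inv_apply_self]

lemma dec_add (hpi : ∀ a b : SM r, pi (a * b) = pi a + lam a (pi b))
    (g : Multiplicative (AddAut (AM r))) (u v : AM r) :
    pi.symm (g (u + v))
      = pi.symm (g u) * pi.symm (((lam (pi.symm (g u)))⁻¹ * g) v) := by
  apply pi.injective
  rw [Equiv.apply_symm_apply, hpi (pi.symm (g u))]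
  simp only [Equiv.apply_symm_apply, map_add, MAut.mul_apply, MAut.inv_apply_self]

end AuxMain

/-- For a bijective left and right non-degenerate solution, `ν` is invariant
under every `λ'_z` and its inverse (transported to `M` via `π`), and
`λ'_a = λ'_b` for all `(a,b) ∈ η`. -/
theorem nu_invariant_and_lam_eq {X : Type*} (r : X × X → X × X)
    (hYBE : IsYBE r) (hLND : IsLeftND r) (hRND : IsRightND r)
    (hbij : Function.Bijective r)
(lam : SM r →* Multiplicative (AddAut (AM r)))
    (hlamX : ∀ x y : X, Multiplicative.toAdd (lam (ofSM r x)) (ofAM r y) = ofAM r (ybeSigma r x y))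
    (pi : SM r ≃ AM r)
    (hpiX : ∀ x : X, pi (ofSM r x) = ofAM r x)
    (hpi : ∀ a b : SM r, pi (a * b) = pi a + Multiplicative.toAdd (lam a) (pi b))
(eta : AddCon (AM r))
    (heta : IsLeast {c : AddCon (AM r) | ∀ z a b : AM r, c (z + a) (z + b) → c a b} eta)
(nu : Con (SM r))
    (hnu : IsLeast {c : Con (SM r) | ∀ z a b : SM r, c (z * a) (z * b) → c a b} nu) :
    (∀ z : SM r,
      ({p : SM r × SM r | nu p.1 p.2} =
        {p : SM r × SM r | ∃ a b : SM r, nu a b ∧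
          p = (pi.symm (Multiplicative.toAdd (lam z) (pi a)), pi.symm (Multiplicative.toAdd (lam z) (pi b)))}) ∧
      ({p : SM r × SM r | nu p.1 p.2} =
        {p : SM r × SM r | ∃ a b : SM r, nu a b ∧
          p = (pi.symm (Multiplicative.toAdd (lam z)⁻¹ (pi a)), pi.symm (Multiplicative.toAdd (lam z)⁻¹ (pi b)))})) ∧
    (∀ a b : AM r, eta a b → lam (pi.symm a) = lam (pi.symm b)) := by
  classical
  have hsurj : Function.Surjective (theta lam pi) :=
    theta_surj lam pi hYBE hLND hRND hlamX hpiX hpi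
  have part2 : ∀ a b : AM r, eta a b → lam (pi.symm a) = lam (pi.symm b) := by
    let cE : AddCon (AM r) :=
      { r := fun u v => eta u v ∧ ∀ g ∈ lamG lam, lam (pi.symm (g u)) = lam (pi.symm (g v))
        iseqv := ⟨fun u => ⟨eta.refl u, fun g _ => rfl⟩,
          fun h => ⟨eta.symm h.1, fun g hg => (h.2 g hg).symm⟩,
          fun h1 h2 => ⟨eta.trans h1.1 h2.1, fun g hg => (h1.2 g hg).trans (h2.2 g hg)⟩⟩
        add' := by
          intro u v u' v' h1 h2
          refine ⟨eta.add h1.1 h2.1, ?_⟩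
          intro g hg
          have hmem : (lam (pi.symm (g u)))⁻¹ * g ∈ lamG lam :=
            mul_mem (inv_mem (lam_mem_lamG lam _)) hg
          have e1 : lam (pi.symm (g u)) = lam (pi.symm (g v)) := h1.2 g hg
          have e2 := h2.2 _ hmem
          rw [dec_add lam pi hpi g u u', dec_add lam pi hpi g v v',
            map_mul lam, map_mul lam, ← e1, e2] }
    have hmem : cE ∈ {c : AddCon (AM r) | ∀ z a b : AM r, c (z + a) (z + b) → c a b} := by
      intro w u v h
      refine ⟨heta.1 w u v h.1, ?_⟩
      intro g' hg'
      obtain ⟨g, hgmem, hgeq⟩ := solveF lam pi hsurj hg' w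
      have h2 := h.2 g hgmem
      rw [dec_add lam pi hpi g w u, dec_add lam pi hpi g w v,
        map_mul lam, map_mul lam, hgeq] at h2
      exact mul_left_cancel h2
    have hle : eta ≤ cE := heta.2 hmem
    intro a b hab
    have h2 := (hle hab).2 1 (one_mem _)
    simpa [MAut.one_apply] using h2
  have part1core : ∀ g ∈ lamG lam, ∀ a b : SM r, nu a b →
      nu (pi.symm (g (pi a))) (pi.symm (g (pi b))) := by
    let nuT : Con (SM r) :=
      { r := fun a b => ∀ g ∈ lamG lam,
          nu (pi.symm (g (pi a))) (pi.symm (g (pi b))) ∧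
            lam (pi.symm (g (pi a))) = lam (pi.symm (g (pi b)))
        iseqv := ⟨fun a g _ => ⟨nu.refl _, rfl⟩,
          fun h g hg => ⟨nu.symm (h g hg).1, (h g hg).2.symm⟩,
          fun h1 h2 g hg => ⟨nu.trans (h1 g hg).1 (h2 g hg).1, (h1 g hg).2.trans (h2 g hg).2⟩⟩
        mul' := by
          intro a b a' b' h1 h2 g hg
          have e0 : lam a = lam b := by
            have h3 := (h1 1 (one_mem _)).2
            simpa [MAut.one_apply, Equiv.symm_apply_apply] using h3
          have e1 := (h1 g hg).2
          have hmem : (lam (pi.symm (g (pi a))))⁻¹ * g * lam a ∈ lamG lam :=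
            mul_mem (mul_mem (inv_mem (lam_mem_lamG lam _)) hg) (lam_mem_lamG lam _)
          have h2' := h2 _ hmem
          constructor
          · rw [dec_mul lam pi hpi g a a', dec_mul lam pi hpi g b b', ← e1, ← e0]
            exact nu.mul (h1 g hg).1 h2'.1
          · rw [dec_mul lam pi hpi g a a', dec_mul lam pi hpi g b b',
              map_mul lam, map_mul lam, ← e1, ← e0, h2'.2] }
    have hmem : nuT ∈ {c : Con (SM r) | ∀ z a b : SM r, c (z * a) (z * b) → c a b} := by
      intro w a b h g' hg'
      obtain ⟨g, hgmem, hgeq⟩ := solveE lam pi hsurj hg' w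
      have h2 := h g hgmem
      rw [dec_mul lam pi hpi g w a, dec_mul lam pi hpi g w b, hgeq] at h2
      refine ⟨hnu.1 _ _ _ h2.1, ?_⟩
      have h3 := h2.2
      rw [map_mul lam, map_mul lam] at h3
      exact mul_left_cancel h3
    have hle : nu ≤ nuT := hnu.2 hmem
    intro g hg a b hab
    exact (hle hab g hg).1
  refine ⟨?_, part2⟩
  intro z
  constructor
  · ext p
    simp only [Set.mem_setOf_eq]
    constructor
    · intro hp
      refine ⟨pi.symm ((lam z)⁻¹ (pi p.1)), pi.symm ((lam z)⁻¹ (pi p.2)),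
        part1core _ (inv_mem (lam_mem_lamG lam z)) _ _ hp, ?_⟩
      simp [Equiv.apply_symm_apply, MAut.inv_apply_self, Equiv.symm_apply_apply]
    · rintro ⟨a, b, hab, hp⟩
      rw [hp]
      exact part1core _ (lam_mem_lamG lam z) _ _ hab
  · ext p
    simp only [Set.mem_setOf_eq]
    constructor
    · intro hp
      refine ⟨pi.symm (lam z (pi p.1)), pi.symm (lam z (pi p.2)),
        part1core _ (lam_mem_lamG lam z) _ _ hp, ?_⟩
      simp [Equiv.apply_symm_apply, MAut.apply_inv_self, Equiv.symm_apply_apply]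
    · rintro ⟨a, b, hab, hp⟩
      rw [hp]
      exact part1core _ (inv_mem (lam_mem_lamG lam z)) _ _ hab
end
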